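/- arXiv:2010.00805 — 5 statements merged into one kernel-verified Lean document; each statement's English description precedes it below -/
import Mathlib

section
/- The cone of d×d real symmetric positive semidefinite matrices is k-Terracini convex for every k: for any rank-one matrices v_1 v_1', ..., v_k v_k' generating extreme rays, the convex tangent space at their sum equals the sum of the convex tangent spaces at each v_i v_i'. -/
open Set RealInnerProductSpace Metric

section Defs

variable {E : Type*} [AddCommGroup E] [Module ℝ E]

/-- `C` is a convex cone (as a set). -/
def IsConvexCone (C : Set E) : Prop :=
  Convex ℝ C ∧ ∀ x ∈ C, ∀ t : ℝ, 0 ≤ t → t • x ∈ C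

/-- A cone is pointed if it contains no lines through the origin. -/
def IsPointedCone (C : Set E) : Prop := C ∩ (-C) ⊆ {0}

/-- `x` generates an extreme ray of `C`. -/
def IsExtremeRayGen (C : Set E) (x : E) : Prop :=
  x ∈ C ∧ x ≠ 0 ∧ ∀ y ∈ C, ∀ z ∈ C, y + z = x → ∃ t : ℝ, 0 ≤ t ∧ y = t • x

/-- `F` is a face of the convex cone `C`. -/
def IsFace (C F : Set E) : Prop :=
  F ⊆ C ∧ ∀ x ∈ C, ∀ y ∈ C, x + y ∈ F → x ∈ F ∧ y ∈ F

/-- The minimal face of `C` containing `x` (the intersection of all faces containing `x`). -/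
def minFace (C : Set E) (x : E) : Set E := ⋂₀ {F | IsFace C F ∧ x ∈ F}

variable [TopologicalSpace E]

/-- The cone of feasible directions from `x` into `C`. -/
def feasDir (C : Set E) (x : E) : Set E :=
  {v | ∃ t : ℝ, 0 ≤ t ∧ ∃ z ∈ C, v = t • (z - x)}

/-- The tangent cone of `C` at `x`: the closure of the cone of feasible directions. -/
def tangentCone' (C : Set E) (x : E) : Set E := closure (feasDir C x)

/-- The convex tangent space of `C` at `x`: the lineality space of the tangent cone. -/
def ctSpace (C : Set E) (x : E) : Set E := tangentCone' C x ∩ -(tangentCone' C x)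

/-- `C` is `k`-Terracini convex: for any `k` generators of extreme rays, the convex tangent
space at their sum equals the (subspace) sum of the individual convex tangent spaces. -/
def kTerracini (C : Set E) (k : ℕ) : Prop :=
  ∀ x : Fin k → E, (∀ i, IsExtremeRayGen C (x i)) →
    ctSpace C (∑ i, x i) = (Submodule.span ℝ (⋃ i, ctSpace C (x i)) : Set E)

end Defs

section InnerDefs

variable {E : Type*} [NormedAddCommGroup E] [InnerProductSpace ℝ E]

/-- The normal cone of `C` at `x`: linear functionals (identified with vectors) that are
nonpositive on `C` and vanish at `x`. -/
def normalCone' (C : Set E) (x : E) : Set E :=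
  {ℓ : E | (∀ z ∈ C, ⟪ℓ, z⟫ ≤ 0) ∧ ⟪ℓ, x⟫ = 0}

/-- `F` is an exposed face of the cone `C`. -/
def IsExposedFace (C F : Set E) : Prop :=
  ∃ ℓ : E, (∀ z ∈ C, ⟪ℓ, z⟫ ≤ 0) ∧ F = {z ∈ C | ⟪ℓ, z⟫ = 0}

/-- The set of normalized generators of extreme rays of `K`. -/
def normExt (K : Set E) : Set E := {x | IsExtremeRayGen K x ∧ ‖x‖ = 1}

/-- `K` is `k`-neighborly. -/
def kNeighborly (K : Set E) (k : ℕ) : Prop :=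
  ∀ I : Set E, I ⊆ normExt K → I.Finite → I.ncard ≤ k →
    ∃ ℓ : E, (∀ x ∈ I, ⟪ℓ, x⟫ = 0) ∧ ∀ x ∈ normExt K \ I, 0 < ⟪ℓ, x⟫

/-- `K` is non-degenerate `k`-neighborly: the exposing functional additionally satisfies a
local quadratic growth condition near the exposed extreme rays. -/
def nonDegNeighborly (K : Set E) (k : ℕ) : Prop :=
  ∀ I : Set E, I ⊆ normExt K → I.Finite → I.ncard ≤ k →
    ∃ (ε μ : ℝ) (ℓ : E), 0 < ε ∧ 0 < μ ∧
      (∀ x ∈ I, ⟪ℓ, x⟫ = 0) ∧ (∀ x ∈ normExt K \ I, 0 < ⟪ℓ, x⟫) ∧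
      ∀ x ∈ normExt K, (∃ z ∈ I, dist x z < ε) →
        μ * (Metric.infDist x I) ^ 2 ≤ ⟪ℓ, x⟫

/-- `K` is regular: linear functionals nonnegative on `K` vanishing at an extreme ray grow at
most quadratically near that extreme ray, along normalized extreme rays. -/
def RegularCone (K : Set E) : Prop :=
  ∀ x₀ : E, IsExtremeRayGen K x₀ → ∀ ℓ : E, (∀ z ∈ K, 0 ≤ ⟪ℓ, z⟫) → ⟪ℓ, x₀⟫ = 0 →
    ∃ δ ν : ℝ, 0 < δ ∧ 0 < ν ∧
      ∀ x ∈ normExt K, ‖x - x₀‖ < δ → ⟪ℓ, x⟫ ≤ ν * ‖x - x₀‖ ^ 2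

end InnerDefs

/-!
Write `X = ∑ vᵢ vᵢᵀ` and `W` for the common orthogonal complement of the `vᵢ`, which is `ker X`.
Both sides of the identity are the space of symmetric `Q` whose quadratic form vanishes on `W`.
Tangent directions `Q` at `X` satisfy `uᵀ Q u ≥ 0` on `ker X`, which gives one inclusion.
Conversely, if `P` is the orthogonal projection onto `span vᵢ`, polarization gives
`(1 - P) Q (1 - P) = 0`, so `Q = M + Mᵀ` with `M = P Q - ½ P Q P`, whose columns lie in `span vᵢ`;
hence `Q = ∑ (vᵢ wᵢᵀ + wᵢ vᵢᵀ)`. Each such matrix is a two-sided tangent direction at `X`, because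
`∑ (vᵢ + t wᵢ)(vᵢ + t wᵢ)ᵀ = X + t Q + t² ∑ wᵢ wᵢᵀ` is positive semidefinite for every real `t`.
-/

open Matrix Filter Topology

section TangentCone

variable {E : Type*} [AddCommGroup E] [Module ℝ E] [TopologicalSpace E] [ContinuousAdd E]
  [ContinuousSMul ℝ E]

theorem mem_tangentCone'_of_add_smul_add_sq_smul_mem {C : Set E} {x m r : E}
    (h : ∀ t : ℝ, 0 < t → x + t • m + t ^ 2 • r ∈ C) : m ∈ tangentCone' C x := by
  have hfeas : ∀ t : ℝ, 0 < t → m + t • r ∈ feasDir C x := fun t ht =>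
    ⟨t⁻¹, inv_nonneg.mpr ht.le, _, h t ht, by
      rw [add_assoc, add_sub_cancel_left, smul_add, smul_smul, smul_smul,
        inv_mul_cancel₀ ht.ne', one_smul, sq, ← mul_assoc, inv_mul_cancel₀ ht.ne', one_mul]⟩
  have hlim : Tendsto (fun t : ℝ => m + t • r) (𝓝[>] 0) (𝓝 m) := by
    have : Continuous fun t : ℝ => m + t • r := by fun_prop
    simpa using (this.tendsto 0).mono_left nhdsWithin_le_nhds
  exact mem_closure_of_tendsto hlim (eventually_nhdsWithin_of_forall hfeas)

theorem mem_ctSpace_of_add_smul_add_sq_smul_mem {C : Set E} {x m r : E}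
    (h : ∀ t : ℝ, x + t • m + t ^ 2 • r ∈ C) : m ∈ ctSpace C x := by
  refine ⟨mem_tangentCone'_of_add_smul_add_sq_smul_mem fun t _ => h t,
    mem_tangentCone'_of_add_smul_add_sq_smul_mem (r := r) fun t _ => ?_⟩
  simpa [neg_sq] using h (-t)

end TangentCone

section LinearAlgebra

variable {m n ι : Type*} [Fintype n] [Fintype ι]

theorem Matrix.eq_zero_of_forall_dotProduct_mulVec {R : Type*} [CommSemiring R] [DecidableEq n]
    {A : Matrix n n R} (h : ∀ a b, a ⬝ᵥ A *ᵥ b = 0) : A = 0 := by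
  ext j l
  simpa [mulVec_single_one, single_dotProduct] using h (Pi.single j 1) (Pi.single l 1)

theorem Matrix.exists_eq_sum_vecMulVec_of_mulVec_mem_span {R : Type*} [CommSemiring R]
    [DecidableEq n] {v : ι → m → R} {M : Matrix m n R}
    (h : ∀ x, M *ᵥ x ∈ Submodule.span R (Set.range v)) :
    ∃ w : ι → n → R, M = ∑ i, vecMulVec (v i) (w i) := by
  choose c hc using fun l => (Submodule.mem_span_range_iff_exists_fun R).mp (h (Pi.single l 1))
  refine ⟨fun i l => c l i, ?_⟩
  ext j l
  simpa [Matrix.sum_apply, vecMulVec_apply, Finset.sum_apply, mulVec_single_one, mul_comm]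
    using (congrFun (hc l) j).symm

theorem Matrix.sum_vecMulVec_self_mulVec_eq_zero_iff (v : ι → n → ℝ) (u : n → ℝ) :
    (∑ i, vecMulVec (v i) (v i)) *ᵥ u = 0 ↔ ∀ i, v i ⬝ᵥ u = 0 := by
  have hgram : (∑ i, vecMulVec (v i) (v i)) = (of v)ᴴ * of v := by
    ext j l
    simp [Matrix.sum_apply, vecMulVec_apply, mul_apply]
  rw [hgram, conjTranspose_mul_self_mulVec_eq_zero, funext_iff]
  rfl

theorem Matrix.posSemidef_sum_vecMulVec_self (v : ι → n → ℝ) :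
    (∑ i, vecMulVec (v i) (v i)).PosSemidef :=
  posSemidef_sum _ fun i _ => by simpa using posSemidef_vecMulVec_self_star (v i)

theorem Matrix.exists_isHermitian_mulVec_mem_and_orthogonal [DecidableEq n]
    (V : Submodule ℝ (n → ℝ)) :
    ∃ P : Matrix n n ℝ, P.IsHermitian ∧ ∀ x, P *ᵥ x ∈ V ∧ ∀ y ∈ V, y ⬝ᵥ (x - P *ᵥ x) = 0 := by
  let U : Submodule ℝ (EuclideanSpace ℝ n) :=
    V.comap (WithLp.linearEquiv 2 ℝ (n → ℝ)).toLinearMap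
  let P : Matrix n n ℝ := toEuclideanLin.symm U.starProjection
  have hPU : toEuclideanLin P = U.starProjection := LinearEquiv.apply_symm_apply _ _
  have hP : ∀ x, P *ᵥ x = WithLp.ofLp (U.starProjection (WithLp.toLp 2 x)) := fun x =>
    congrArg WithLp.ofLp (LinearMap.congr_fun hPU (WithLp.toLp 2 x))
  refine ⟨P, ?_, fun x => ⟨?_, fun y hy => ?_⟩⟩
  · rw [← isSymmetric_toEuclideanLin_iff, hPU]
    exact U.starProjection_isSymmetric
  · rw [hP]
    exact U.starProjection_apply_mem _
  · have horth := U.sub_starProjection_mem_orthogonal (WithLp.toLp 2 x)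
    have := (Submodule.mem_orthogonal U _).mp horth (WithLp.toLp 2 y) hy
    rw [hP]
    simpa [EuclideanSpace.inner_eq_star_dotProduct, dotProduct_comm] using this

end LinearAlgebra

section PosSemidefCone

variable {n ι : Type*} [Fintype n]

def symmVanishingOnPerp (v : ι → n → ℝ) : Submodule ℝ (Matrix n n ℝ) where
  carrier := {Q | Q.IsHermitian ∧ ∀ u, (∀ i, v i ⬝ᵥ u = 0) → u ⬝ᵥ Q *ᵥ u = 0}
  add_mem' := fun ⟨hA, hA'⟩ ⟨hB, hB'⟩ =>
    ⟨hA.add hB, fun u hu => by rw [add_mulVec, dotProduct_add, hA' u hu, hB' u hu, add_zero]⟩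
  zero_mem' := ⟨isHermitian_zero, fun u _ => by rw [zero_mulVec, dotProduct_zero]⟩
  smul_mem' := fun c _ ⟨hA, hA'⟩ =>
    ⟨hA.smul (IsSelfAdjoint.all c), fun u hu => by
      rw [smul_mulVec, dotProduct_smul, hA' u hu, smul_zero]⟩

theorem symmVanishingOnPerp_comp_le {ι' : Type*} (v : ι → n → ℝ) (f : ι' → ι) :
    symmVanishingOnPerp (v ∘ f) ≤ symmVanishingOnPerp v :=
  fun _ ⟨hQ, hQ'⟩ => ⟨hQ, fun u hu => hQ' u fun j => hu (f j)⟩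

theorem dotProduct_mulVec_eq_zero_of_mem_symmVanishingOnPerp {v : ι → n → ℝ}
    {Q : Matrix n n ℝ} (hQ : Q ∈ symmVanishingOnPerp v) {a b : n → ℝ}
    (ha : ∀ i, v i ⬝ᵥ a = 0) (hb : ∀ i, v i ⬝ᵥ b = 0) : a ⬝ᵥ Q *ᵥ b = 0 := by
  have hsymm : b ⬝ᵥ Q *ᵥ a = a ⬝ᵥ Q *ᵥ b := by
    rw [dotProduct_mulVec, ← mulVec_transpose, dotProduct_comm,
      ← conjTranspose_eq_transpose_of_trivial, hQ.1]
  have hab := hQ.2 (a + b) fun i => by rw [dotProduct_add, ha i, hb i, add_zero]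
  rw [mulVec_add, dotProduct_add, add_dotProduct, add_dotProduct, hQ.2 a ha, hQ.2 b hb, hsymm]
    at hab
  linarith

theorem tangentCone'_posSemidef_subset {X : Matrix n n ℝ} (hX : X.IsHermitian) :
    tangentCone' {A : Matrix n n ℝ | A.PosSemidef} X ⊆
      {Q | Q.IsHermitian ∧ ∀ u, X *ᵥ u = 0 → 0 ≤ u ⬝ᵥ Q *ᵥ u} := by
  have hclosed :
      IsClosed {Q : Matrix n n ℝ | Q.IsHermitian ∧ ∀ u, X *ᵥ u = 0 → 0 ≤ u ⬝ᵥ Q *ᵥ u} := by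
    simp only [ofPred_and, ofPred_forall]
    exact (isClosed_eq continuous_id.matrix_conjTranspose continuous_id).inter <|
      isClosed_iInter fun u => isClosed_iInter fun _ => isClosed_le continuous_const <|
        continuous_const.dotProduct (continuous_id.matrix_mulVec continuous_const)
  refine closure_minimal ?_ hclosed
  rintro _ ⟨t, ht, Z, hZ, rfl⟩
  refine ⟨(hZ.1.sub hX).smul (IsSelfAdjoint.all t), fun u hu => ?_⟩
  rw [smul_mulVec, sub_mulVec, hu, sub_zero, dotProduct_smul, smul_eq_mul]
  exact mul_nonneg ht (by simpa using hZ.dotProduct_mulVec_nonneg u)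

variable [Fintype ι]

theorem ctSpace_posSemidef_sum_vecMulVec_subset (v : ι → n → ℝ) :
    ctSpace {A : Matrix n n ℝ | A.PosSemidef} (∑ i, vecMulVec (v i) (v i)) ⊆
      symmVanishingOnPerp v := by
  have hX := (posSemidef_sum_vecMulVec_self v).isHermitian
  rintro Q ⟨hQ, hQneg⟩
  obtain ⟨hQ, hQ'⟩ := tangentCone'_posSemidef_subset hX hQ
  obtain ⟨-, hQneg'⟩ := tangentCone'_posSemidef_subset hX hQneg
  refine ⟨hQ, fun u hu => ?_⟩
  have hker := (sum_vecMulVec_self_mulVec_eq_zero_iff v u).mpr hu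
  have hneg := hQneg' u hker
  rw [neg_mulVec, dotProduct_neg, neg_nonneg] at hneg
  exact le_antisymm hneg (hQ' u hker)

theorem exists_eq_sum_vecMulVec_add_of_mem_symmVanishingOnPerp [DecidableEq n]
    {v : ι → n → ℝ} {Q : Matrix n n ℝ} (hQ : Q ∈ symmVanishingOnPerp v) :
    ∃ w : ι → n → ℝ, Q = ∑ i, (vecMulVec (v i) (w i) + vecMulVec (w i) (v i)) := by
  obtain ⟨P, hP, hPV⟩ :=
    exists_isHermitian_mulVec_mem_and_orthogonal (Submodule.span ℝ (Set.range v))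
  have hperp : ∀ x i, v i ⬝ᵥ (1 - P) *ᵥ x = 0 := fun x i => by
    rw [sub_mulVec, one_mulVec]
    exact (hPV x).2 _ (Submodule.subset_span ⟨i, rfl⟩)
  have hcompl : (1 - P) * Q * (1 - P) = 0 := by
    refine eq_zero_of_forall_dotProduct_mulVec fun a b => ?_
    rw [← mulVec_mulVec, ← mulVec_mulVec, dotProduct_mulVec, ← mulVec_transpose,
      ← conjTranspose_eq_transpose_of_trivial, (isHermitian_one.sub hP).eq]
    exact dotProduct_mulVec_eq_zero_of_mem_symmVanishingOnPerp hQ (hperp a) (hperp b)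
  set M := P * (Q - (2⁻¹ : ℝ) • (Q * P))
  have hsplit : Q = M + Mᴴ := by
    have hMH : Mᴴ = (Q - (2⁻¹ : ℝ) • (P * Q)) * P := by
      rw [conjTranspose_mul, conjTranspose_sub, conjTranspose_smul, conjTranspose_mul, hP.eq,
        hQ.1.eq, star_trivial]
    calc Q = Q - (1 - P) * Q * (1 - P) := by rw [hcompl, sub_zero]
      _ = M + Mᴴ := by
        rw [hMH]
        simp only [M, mul_sub, sub_mul, one_mul, mul_one, mul_smul_comm, smul_mul_assoc,
          mul_assoc]
        module
  obtain ⟨w, hw⟩ := exists_eq_sum_vecMulVec_of_mulVec_mem_span (v := v) (M := M) fun x => by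
    rw [← mulVec_mulVec]
    exact (hPV _).1
  refine ⟨w, ?_⟩
  rw [hsplit, hw, conjTranspose_sum, ← Finset.sum_add_distrib]
  simp

theorem sum_vecMulVec_add_mem_ctSpace_posSemidef (v w : ι → n → ℝ) :
    ∑ i, (vecMulVec (v i) (w i) + vecMulVec (w i) (v i)) ∈
      ctSpace {A : Matrix n n ℝ | A.PosSemidef} (∑ i, vecMulVec (v i) (v i)) := by
  refine mem_ctSpace_of_add_smul_add_sq_smul_mem (r := ∑ i, vecMulVec (w i) (w i)) fun t => ?_
  have hexpand : ∑ i, vecMulVec (v i) (v i) + t • ∑ i, (vecMulVec (v i) (w i) +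
      vecMulVec (w i) (v i)) + t ^ 2 • ∑ i, vecMulVec (w i) (w i) =
      ∑ i, vecMulVec (v i + t • w i) (v i + t • w i) := by
    rw [Finset.smul_sum, Finset.smul_sum, ← Finset.sum_add_distrib, ← Finset.sum_add_distrib]
    refine Finset.sum_congr rfl fun i _ => ?_
    rw [add_vecMulVec, vecMulVec_add, vecMulVec_add, smul_vecMulVec, vecMulVec_smul,
      smul_vecMulVec, vecMulVec_smul]
    module
  rw [Set.mem_ofPred_eq, hexpand]
  exact posSemidef_sum_vecMulVec_self _

theorem ctSpace_posSemidef_sum_vecMulVec [DecidableEq n] (v : ι → n → ℝ) :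
    ctSpace {A : Matrix n n ℝ | A.PosSemidef} (∑ i, vecMulVec (v i) (v i)) =
      symmVanishingOnPerp v := by
  refine (ctSpace_posSemidef_sum_vecMulVec_subset v).antisymm fun Q hQ => ?_
  obtain ⟨w, rfl⟩ := exists_eq_sum_vecMulVec_add_of_mem_symmVanishingOnPerp hQ
  exact sum_vecMulVec_add_mem_ctSpace_posSemidef v w

end PosSemidefCone

theorem psd_terracini_general {d k : ℕ} (v : Fin k → (Fin d → ℝ)) :
    ctSpace {A : Matrix (Fin d) (Fin d) ℝ | A.PosSemidef}
        (∑ i, Matrix.vecMulVec (v i) (v i))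
      = (Submodule.span ℝ (⋃ i, ctSpace {A : Matrix (Fin d) (Fin d) ℝ | A.PosSemidef}
          (Matrix.vecMulVec (v i) (v i))) : Set (Matrix (Fin d) (Fin d) ℝ)) := by
  have hsingle : ∀ i, ctSpace {A : Matrix (Fin d) (Fin d) ℝ | A.PosSemidef}
      (vecMulVec (v i) (v i)) = symmVanishingOnPerp (v ∘ fun _ : Unit => i) := fun i => by
    simpa using ctSpace_posSemidef_sum_vecMulVec (v ∘ fun _ : Unit => i)
  rw [ctSpace_posSemidef_sum_vecMulVec]
  refine congrArg SetLike.coe (le_antisymm (fun Q hQ => ?_) (Submodule.span_le.mpr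
    (iUnion_subset fun i => (hsingle i).trans_le (symmVanishingOnPerp_comp_le v _))))
  obtain ⟨w, rfl⟩ := exists_eq_sum_vecMulVec_add_of_mem_symmVanishingOnPerp hQ
  refine Submodule.sum_mem _ fun i _ => Submodule.subset_span (mem_iUnion.mpr ⟨i, ?_⟩)
  simpa using sum_vecMulVec_add_mem_ctSpace_posSemidef (fun _ : Unit => v i) (fun _ => w i)

/-- The positive semidefinite cone is `k`-Terracini convex for every `k`: for any
rank-one matrices `vᵢvᵢ'` generating extreme rays, the convex tangent space at their sum equals
the sum of the convex tangent spaces at each `vᵢvᵢ'`. -/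
theorem psd_terracini {d k : ℕ} (v : Fin k → (Fin d → ℝ)) (hv : ∀ i, v i ≠ 0) :
    ctSpace {A : Matrix (Fin d) (Fin d) ℝ | A.PosSemidef}
        (∑ i, Matrix.vecMulVec (v i) (v i))
      = (Submodule.span ℝ (⋃ i, ctSpace {A : Matrix (Fin d) (Fin d) ℝ | A.PosSemidef}
          (Matrix.vecMulVec (v i) (v i))) : Set (Matrix (Fin d) (Fin d) ℝ)) :=
  psd_terracini_general v
end

section
/- If a closed, pointed, convex cone C is dim(C)-Terracini convex, then C is Terracini convex (i.e., k-Terracini convex for all k). -/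
/-!
Only the membership of the generators in `C` matters. Given `k + 1` generators, either one of
them lies in the convex tangent space at the sum of the others, in which case adding it does not
change that space and induction on `k` applies; or none does, and then the convex tangent spaces
at the partial sums form a strictly increasing chain of subspaces of `span C`, so `k + 1 ≤ dim C`
and the `dim C`-Terracini property descends to `k + 1` by repeating a generator. For `k = 0` the
claim is that the closed pointed cone has trivial lineality space.
-/

open Set RealInnerProductSpace Metric

namespace IsConvexCone

variable {E : Type*} [AddCommGroup E] [Module ℝ E] {C : Set E}

lemma add_mem (hC : IsConvexCone C) {x y : E} (hx : x ∈ C) (hy : y ∈ C) : x + y ∈ C := by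
  convert hC.2 _ (hC.1 hx hy (by norm_num : (0 : ℝ) ≤ 1 / 2) (by norm_num : (0 : ℝ) ≤ 1 / 2)
    (by norm_num)) 2 (by norm_num) using 1
  module

lemma zero_mem (hC : IsConvexCone C) (hne : C.Nonempty) : (0 : E) ∈ C := by
  obtain ⟨x, hx⟩ := hne
  simpa using hC.2 x hx 0 le_rfl

lemma sum_mem (hC : IsConvexCone C) (hne : C.Nonempty) {ι : Type*} (s : Finset ι) {x : ι → E}
    (hx : ∀ i ∈ s, x i ∈ C) : ∑ i ∈ s, x i ∈ C :=
  Finset.sum_induction x (· ∈ C) (fun _ _ => hC.add_mem) (hC.zero_mem hne) hx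

end IsConvexCone

lemma feasDir_add_mem {E : Type*} [AddCommGroup E] [Module ℝ E] {C : Set E} {a u v : E}
    (hC : Convex ℝ C) (hne : C.Nonempty) (hu : u ∈ feasDir C a) (hv : v ∈ feasDir C a) :
    u + v ∈ feasDir C a := by
  obtain ⟨t, ht, z, hz, rfl⟩ := hu
  obtain ⟨s, hs, w, hw, rfl⟩ := hv
  rcases (add_nonneg ht hs).eq_or_lt with hts | hts
  · obtain ⟨rfl, rfl⟩ : t = 0 ∧ s = 0 := ⟨by linarith, by linarith⟩
    exact ⟨0, le_rfl, hne.some, hne.some_mem, by simp⟩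
  -- `t (z - a) + s (w - a) = (t + s) (p - a)` for a convex combination `p` of `z` and `w`
  refine ⟨t + s, hts.le, (t / (t + s)) • z + (s / (t + s)) • w,
    hC hz hw (by positivity) (by positivity) (by field_simp), ?_⟩
  match_scalars <;> field_simp; ring

noncomputable section TangentSpace

variable {E : Type*} [AddCommGroup E] [Module ℝ E] [TopologicalSpace E] [ContinuousAdd E]
  [ContinuousConstSMul ℝ E] {C : Set E} {a b x : E}

def feasibleCone (hC : Convex ℝ C) (hne : C.Nonempty) (a : E) : PointedCone ℝ E where
  carrier := feasDir C a
  zero_mem' := ⟨0, le_rfl, hne.some, hne.some_mem, (zero_smul ℝ _).symm⟩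
  add_mem' := feasDir_add_mem hC hne
  smul_mem' := by
    rintro ⟨c, hc⟩ _ ⟨t, ht, z, hz, rfl⟩
    exact ⟨c * t, mul_nonneg hc ht, z, hz, smul_smul c t _⟩

def ctSubspace (hC : Convex ℝ C) (hne : C.Nonempty) (a : E) : Submodule ℝ E :=
  (feasibleCone hC hne a).closure.lineal

lemma coe_ctSubspace (hC : Convex ℝ C) (hne : C.Nonempty) :
    (ctSubspace hC hne a : Set E) = ctSpace C a :=
  rfl

lemma mem_ctSubspace {hC : Convex ℝ C} {hne : C.Nonempty} {v : E} :
    v ∈ ctSubspace hC hne a ↔ v ∈ tangentCone' C a ∧ -v ∈ tangentCone' C a :=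
  Iff.rfl

lemma ctSubspace_le_of_feasDir_subset (hC : Convex ℝ C) (hne : C.Nonempty)
    (h : feasDir C a ⊆ tangentCone' C b) : ctSubspace hC hne a ≤ ctSubspace hC hne b := by
  have hT : tangentCone' C a ⊆ tangentCone' C b := closure_minimal h isClosed_closure
  exact fun v hv => ⟨hT hv.1, hT hv.2⟩

variable (hC : IsConvexCone C) (hne : C.Nonempty)
include hC hne

lemma ctSubspace_le_ctSubspace_add (hb : b ∈ C) :
    ctSubspace hC.1 hne a ≤ ctSubspace hC.1 hne (b + a) := by
  refine ctSubspace_le_of_feasDir_subset hC.1 hne fun _ ⟨t, ht, z, hz, hv⟩ => subset_closure ?_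
  exact ⟨t, ht, b + z, hC.add_mem hb hz, by rw [hv, add_sub_add_left_eq_sub]⟩

lemma mem_ctSubspace_add_self (hx : x ∈ C) (ha : a ∈ C) : x ∈ ctSubspace hC.1 hne (x + a) := by
  refine mem_ctSubspace.2 ⟨subset_closure ⟨1, zero_le_one, x + (x + a), hC.add_mem hx
    (hC.add_mem hx ha), by simp⟩, subset_closure ⟨1, zero_le_one, a, ha, by simp⟩⟩

lemma ctSubspace_add_of_mem (hx : x ∈ C) (h : x ∈ ctSubspace hC.1 hne a) :
    ctSubspace hC.1 hne (x + a) = ctSubspace hC.1 hne a := by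
  refine le_antisymm (ctSubspace_le_of_feasDir_subset hC.1 hne ?_)
    (ctSubspace_le_ctSubspace_add hC hne hx)
  rintro _ ⟨t, ht, z, hz, rfl⟩
  have hza : t • (z - a) ∈ (feasibleCone hC.1 hne a).closure := subset_closure ⟨t, ht, z, hz, rfl⟩
  have hx' : t • -x ∈ (feasibleCone hC.1 hne a).closure :=
    (feasibleCone hC.1 hne a).closure.smul_mem ht (mem_ctSubspace.1 h).2
  show _ ∈ (feasibleCone hC.1 hne a).closure
  convert (feasibleCone hC.1 hne a).closure.add_mem hza hx' using 1
  module

lemma ctSubspace_zero (hcl : IsClosed C) (hp : IsPointedCone C) :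
    ctSubspace hC.1 hne 0 = ⊥ := by
  have hfeas : feasDir C 0 = C := by
    ext v
    refine ⟨fun ⟨t, ht, z, hz, hv⟩ => ?_, fun hv => ⟨1, zero_le_one, v, hv, by simp⟩⟩
    simpa [hv] using hC.2 z hz t ht
  have hT : tangentCone' C 0 = C := by rw [tangentCone', hfeas, hcl.closure_eq]
  refine (Submodule.eq_bot_iff _).2 fun v hv => hp ?_
  rw [mem_ctSubspace, hT] at hv
  exact ⟨hv.1, hv.2⟩

lemma iSup_ctSubspace_le_ctSubspace_sum {ι : Type*} [Fintype ι] {x : ι → E} (hx : ∀ i, x i ∈ C) :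
    ⨆ i, ctSubspace hC.1 hne (x i) ≤ ctSubspace hC.1 hne (∑ i, x i) := by
  classical
  refine iSup_le fun i => ?_
  rw [← Finset.sum_erase_add _ _ (Finset.mem_univ i)]
  exact ctSubspace_le_ctSubspace_add hC hne (hC.sum_mem hne _ fun j _ => hx j)

lemma kTerracini_iff_ctSubspace {k : ℕ} : kTerracini C k ↔ ∀ x : Fin k → E,
    (∀ i, IsExtremeRayGen C (x i)) →
      ctSubspace hC.1 hne (∑ i, x i) = ⨆ i, ctSubspace hC.1 hne (x i) := by
  simp only [kTerracini, Submodule.iSup_eq_span, ← coe_ctSubspace hC.1 hne, SetLike.coe_set_eq]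

lemma kTerracini_zero (hcl : IsClosed C) (hp : IsPointedCone C) : kTerracini C 0 := by
  rw [kTerracini_iff_ctSubspace hC hne]
  intro x _
  rw [Finset.univ_eq_empty, Finset.sum_empty, iSup_of_empty]
  exact ctSubspace_zero hC hne hcl hp

/-- Repeating a generator changes neither side of the Terracini identity. -/
lemma kTerracini.of_succ_succ {k : ℕ} (h : kTerracini C (k + 2)) : kTerracini C (k + 1) := by
  rw [kTerracini_iff_ctSubspace hC hne] at h ⊢
  intro x hx
  have hx0 : x 0 ∈ ctSubspace hC.1 hne (∑ i, x i) := by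
    rw [Fin.sum_univ_succ]
    exact mem_ctSubspace_add_self hC hne (hx 0).1 (hC.sum_mem hne _ fun i _ => (hx _).1)
  have h' := h (Fin.cons (x 0) x) (Fin.cases (hx 0) hx)
  rw [Fin.sum_cons, ctSubspace_add_of_mem hC hne (hx 0).1 hx0] at h'
  rw [h']
  refine le_antisymm (iSup_le fun i => ?_) (iSup_le fun i => le_iSup_of_le i.succ (by simp))
  induction i using Fin.cases with
  | zero => exact le_iSup_of_le 0 (by simp)
  | succ i => exact le_iSup_of_le i (by simp)

lemma kTerracini.of_le {k n : ℕ} (h : kTerracini C n) (hk : 0 < k) (hkn : k ≤ n) :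
    kTerracini C k := by
  induction n, hkn using Nat.le_induction with
  | base => exact h
  | succ n hkn ih =>
    obtain ⟨m, rfl⟩ := Nat.exists_eq_add_of_lt (hk.trans_le hkn)
    exact ih (h.of_succ_succ hC hne)

/-- Each generator outside the convex tangent space of the sum of the others strictly enlarges
the convex tangent space of the partial sums. -/
lemma card_le_finrank_ctSubspace [FiniteDimensional ℝ E] {ι : Type*} [DecidableEq ι]
    {x : ι → E} (hx : ∀ i, x i ∈ C) (s : Finset ι)
    (hs : ∀ i ∈ s, x i ∉ ctSubspace hC.1 hne (∑ j ∈ s.erase i, x j)) :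
    s.card ≤ Module.finrank ℝ (ctSubspace hC.1 hne (∑ i ∈ s, x i)) := by
  induction s using Finset.induction_on with
  | empty => simp
  | insert a t ha ih =>
    have ht : ∀ i ∈ t, x i ∉ ctSubspace hC.1 hne (∑ j ∈ t.erase i, x j) := by
      intro i hi hmem
      apply hs i (Finset.mem_insert_of_mem hi)
      rw [Finset.erase_insert_of_ne (ne_of_mem_of_not_mem hi ha).symm,
        Finset.sum_insert fun h => ha (Finset.mem_of_mem_erase h)]
      exact ctSubspace_le_ctSubspace_add hC hne (hx a) hmem
    have ha' := hs a (Finset.mem_insert_self a t)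
    rw [Finset.erase_insert ha] at ha'
    have hlt : ctSubspace hC.1 hne (∑ j ∈ t, x j) < ctSubspace hC.1 hne (x a + ∑ j ∈ t, x j) :=
      SetLike.lt_iff_le_and_exists.2 ⟨ctSubspace_le_ctSubspace_add hC hne (hx a), x a,
        mem_ctSubspace_add_self hC hne (hx a) (hC.sum_mem hne _ fun j _ => hx j), ha'⟩
    rw [Finset.card_insert_of_notMem ha, Finset.sum_insert ha]
    exact (ih ht).trans_lt (Submodule.finrank_lt_finrank_of_lt hlt)

end TangentSpace

section FiniteDimensional

variable {E : Type*} [AddCommGroup E] [Module ℝ E] [TopologicalSpace E] [IsTopologicalAddGroup E]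
  [ContinuousSMul ℝ E] [T2Space E] [FiniteDimensional ℝ E] {C : Set E}

lemma ctSubspace_le_span (hC : Convex ℝ C) (hne : C.Nonempty) {a : E} (ha : a ∈ C) :
    ctSubspace hC hne a ≤ Submodule.span ℝ C := by
  have hfeas : feasDir C a ⊆ Submodule.span ℝ C := by
    rintro _ ⟨t, -, z, hz, rfl⟩
    exact Submodule.smul_mem _ t (sub_mem (Submodule.subset_span hz) (Submodule.subset_span ha))
  exact fun v hv => closure_minimal hfeas (Submodule.closed_of_finiteDimensional _) hv.1

variable (hC : IsConvexCone C) (hne : C.Nonempty)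
include hC hne

theorem kTerracini_of_kTerracini_finrank (hcl : IsClosed C) (hp : IsPointedCone C)
    (hT : kTerracini C (Module.finrank ℝ (Submodule.span ℝ C))) (k : ℕ) : kTerracini C k := by
  induction k with
  | zero => exact kTerracini_zero hC hne hcl hp
  | succ k ih =>
    rw [kTerracini_iff_ctSubspace hC hne] at ih ⊢
    intro x hx
    have hxC i : x i ∈ C := (hx i).1
    refine le_antisymm ?_ (iSup_ctSubspace_le_ctSubspace_sum hC hne hxC)
    by_cases hred : ∃ i, x i ∈ ctSubspace hC.1 hne (∑ j ∈ Finset.univ.erase i, x j)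
    · obtain ⟨i, hi⟩ := hred
      have hsum : ∑ j ∈ Finset.univ.erase i, x j = ∑ j, x (i.succAbove j) :=
        add_left_cancel <|
          (Finset.add_sum_erase _ _ (Finset.mem_univ i)).trans (Fin.sum_univ_succAbove x i)
      rw [← Finset.add_sum_erase _ _ (Finset.mem_univ i), ctSubspace_add_of_mem hC hne (hxC i) hi,
        hsum, ih _ fun j => hx _]
      exact iSup_le fun j => le_iSup_of_le (i.succAbove j) le_rfl
    · simp only [not_exists] at hred
      have hk : k + 1 ≤ Module.finrank ℝ (Submodule.span ℝ C) := calc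
        k + 1 = (Finset.univ : Finset (Fin (k + 1))).card := (Finset.card_fin _).symm
        _ ≤ Module.finrank ℝ (ctSubspace hC.1 hne (∑ i, x i)) :=
          card_le_finrank_ctSubspace hC hne hxC _ fun i _ => hred i
        _ ≤ _ := Submodule.finrank_mono <|
          ctSubspace_le_span hC.1 hne (hC.sum_mem hne _ fun i _ => hxC i)
      exact ((kTerracini_iff_ctSubspace hC hne).1 (hT.of_le hC hne k.succ_pos hk) x hx).le

end FiniteDimensional

/-- If a closed, pointed, convex cone `C` is `dim(C)`-Terracini convex, then `C`
is Terracini convex, i.e., `k`-Terracini convex for all `k`. -/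
theorem terracini_of_dim_terracini {d : ℕ}
    (C : Set (EuclideanSpace ℝ (Fin d)))
    (hC : IsConvexCone C) (hclosed : IsClosed C) (hpointed : IsPointedCone C)
    (hT : kTerracini C (Module.finrank ℝ (Submodule.span ℝ C))) :
    ∀ k, kTerracini C k := by
  rcases C.eq_empty_or_nonempty with rfl | hne
  · rintro (_ | k)
    · rwa [Submodule.span_empty, finrank_bot] at hT
    · exact fun x hx => (hx 0).1.elim
  · exact kTerracini_of_kTerracini_finrank hC hne hclosed hpointed hT
end

section
/- Let C be a closed, pointed, convex cone. For any x ∈ C, the minimal exposed face of C containing x equals the intersection of C with the convex tangent space L_C(x). -/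
open Set RealInnerProductSpace Metric

/-!
By the bipolar theorem the tangent cone of `C` at `x` is the polar of the normal cone
`N = {ℓ ∈ C° | ℓ x = 0}`, so its lineality space is `N^⊥`. The exposed faces containing `x` are
exactly the sets `C ∩ ker ℓ` with `ℓ ∈ N`, and their intersection is `C ∩ N^⊥`.
-/

open scoped Pointwise

section Cone

variable {E : Type*} [AddCommGroup E] [Module ℝ E] {C : Set E} {x : E}

lemma IsConvexCone.zero_mem_s9 (hC : IsConvexCone C) (hx : x ∈ C) : (0 : E) ∈ C := by
  simpa using hC.2 x hx 0 le_rfl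

lemma sub_mem_feasDir {z : E} (hz : z ∈ C) : z - x ∈ feasDir C x :=
  ⟨1, zero_le_one, z, hz, (one_smul ℝ _).symm⟩

lemma IsConvexCone.self_mem_feasDir (hC : IsConvexCone C) (hx : x ∈ C) : x ∈ feasDir C x := by
  simpa [two_smul] using sub_mem_feasDir (x := x) (hC.2 x hx 2 zero_le_two)

lemma IsConvexCone.neg_mem_feasDir (hC : IsConvexCone C) (hx : x ∈ C) : -x ∈ feasDir C x := by
  simpa using sub_mem_feasDir (x := x) (hC.zero_mem_s9 hx)

lemma feasDir_eq_hull (hC : Convex ℝ C) (hx : x ∈ C) :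
    feasDir C x = ConvexCone.hull ℝ (-x +ᵥ C) := by
  ext v
  rw [SetLike.mem_coe, ConvexCone.mem_hull_of_convex (hC.vadd (-x))]
  simp only [Set.mem_smul_set, Set.mem_vadd_set, vadd_eq_add]
  constructor
  · rintro ⟨t, ht, z, hz, rfl⟩
    rcases ht.eq_or_lt with rfl | ht
    · exact ⟨1, one_pos, 0, ⟨x, hx, neg_add_cancel x⟩, by simp⟩
    · exact ⟨t, ht, -x + z, ⟨z, hz, rfl⟩, by rw [neg_add_eq_sub]⟩
  · rintro ⟨r, hr, _, ⟨z, hz, rfl⟩, rfl⟩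
    exact ⟨r, hr.le, z, hz, by rw [neg_add_eq_sub]⟩

end Cone

section InnerProduct

variable {E : Type*} [NormedAddCommGroup E] [InnerProductSpace ℝ E] {C : Set E} {x v : E}

lemma exists_properCone_coe_eq_tangentCone' (hC : Convex ℝ C) (hx : x ∈ C) :
    ∃ T : ProperCone ℝ E, (T : Set E) = tangentCone' C x := by
  have hpointed : (ConvexCone.hull ℝ (-x +ᵥ C)).Pointed := by
    rw [ConvexCone.Pointed, ← SetLike.mem_coe, ← feasDir_eq_hull hC hx, ← sub_self x]
    exact sub_mem_feasDir hx
  refine ⟨⟨(ConvexCone.toPointedCone _ hpointed).closure, isClosed_closure⟩, ?_⟩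
  rw [tangentCone', feasDir_eq_hull hC hx]
  rfl

lemma inner_nonpos_of_mem_tangentCone' {ℓ : E} (hℓ : ℓ ∈ normalCone' C x)
    (hv : v ∈ tangentCone' C x) : ⟪ℓ, v⟫ ≤ 0 := by
  refine closure_minimal (t := {w | ⟪ℓ, w⟫ ≤ 0}) ?_
    (isClosed_le (continuous_const.inner continuous_id) continuous_const) hv
  rintro _ ⟨t, ht, z, hz, rfl⟩
  rw [Set.mem_ofPred_eq, real_inner_smul_right, inner_sub_right, hℓ.2, sub_zero]
  exact mul_nonpos_of_nonneg_of_nonpos ht (hℓ.1 z hz)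

lemma exists_mem_normalCone'_inner_pos [CompleteSpace E] (hC : IsConvexCone C) (hx : x ∈ C)
    (hv : v ∉ tangentCone' C x) : ∃ ℓ ∈ normalCone' C x, 0 < ⟪ℓ, v⟫ := by
  obtain ⟨T, hT⟩ := exists_properCone_coe_eq_tangentCone' hC.1 hx
  obtain ⟨y, hyT, hyv⟩ := T.hyperplane_separation' (x₀ := v) (by rwa [← SetLike.mem_coe, hT])
  have hy : ∀ w ∈ feasDir C x, 0 ≤ ⟪w, y⟫ := fun w hw =>
    hyT w (by rw [← SetLike.mem_coe, hT]; exact subset_closure hw)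
  have hxy : ⟪x, y⟫ = 0 :=
    le_antisymm (by simpa using hy _ (hC.neg_mem_feasDir hx)) (hy x (hC.self_mem_feasDir hx))
  refine ⟨-y, ⟨fun z hz => ?_, ?_⟩, ?_⟩
  · simpa [inner_sub_left, hxy, real_inner_comm] using hy _ (sub_mem_feasDir (x := x) hz)
  · simp [real_inner_comm, hxy]
  · simpa [real_inner_comm] using hyv

lemma mem_tangentCone'_iff [CompleteSpace E] (hC : IsConvexCone C) (hx : x ∈ C) :
    v ∈ tangentCone' C x ↔ ∀ ℓ ∈ normalCone' C x, ⟪ℓ, v⟫ ≤ 0 := by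
  refine ⟨fun hv ℓ hℓ => inner_nonpos_of_mem_tangentCone' hℓ hv, fun h => ?_⟩
  by_contra hv
  obtain ⟨ℓ, hℓ, hpos⟩ := exists_mem_normalCone'_inner_pos hC hx hv
  exact (h ℓ hℓ).not_gt hpos

lemma mem_ctSpace_iff [CompleteSpace E] (hC : IsConvexCone C) (hx : x ∈ C) :
    v ∈ ctSpace C x ↔ ∀ ℓ ∈ normalCone' C x, ⟪ℓ, v⟫ = 0 := by
  simp only [ctSpace, Set.mem_inter_iff, Set.mem_neg, mem_tangentCone'_iff hC hx, inner_neg_right,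
    neg_nonpos, ← forall_and, le_antisymm_iff]

lemma sInter_isExposedFace_eq (hx : x ∈ C) :
    ⋂₀ {F | IsExposedFace C F ∧ x ∈ F} = {z ∈ C | ∀ ℓ ∈ normalCone' C x, ⟪ℓ, z⟫ = 0} := by
  ext z
  simp only [Set.mem_sInter, Set.mem_ofPred_eq]
  constructor
  · intro hz
    exact ⟨hz C ⟨⟨0, fun _ _ => by simp, by simp⟩, hx⟩,
      fun ℓ hℓ => (hz _ ⟨⟨ℓ, hℓ.1, rfl⟩, hx, hℓ.2⟩).2⟩
  · rintro ⟨hzC, hz⟩ F ⟨⟨ℓ, hℓC, rfl⟩, -, hℓx⟩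
    exact ⟨hzC, hz ℓ ⟨hℓC, hℓx⟩⟩

end InnerProduct

theorem minExposedFace_eq_inter_ctSpace_general {d : ℕ}
    (C : Set (EuclideanSpace ℝ (Fin d)))
    (hC : IsConvexCone C)
    (x : EuclideanSpace ℝ (Fin d)) (hx : x ∈ C) :
    ⋂₀ {F | IsExposedFace C F ∧ x ∈ F} = C ∩ ctSpace C x := by
  ext z
  rw [sInter_isExposedFace_eq hx, Set.mem_inter_iff, mem_ctSpace_iff hC hx]
  exact Iff.rfl

/-- For a closed, pointed, convex cone `C` and `x ∈ C`, the minimal exposed face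
of `C` containing `x` equals `C ∩ L_C(x)`. -/
theorem minExposedFace_eq_inter_ctSpace {d : ℕ}
    (C : Set (EuclideanSpace ℝ (Fin d)))
    (hC : IsConvexCone C) (hclosed : IsClosed C) (hpointed : IsPointedCone C)
    (x : EuclideanSpace ℝ (Fin d)) (hx : x ∈ C) :
    ⋂₀ {F | IsExposedFace C F ∧ x ∈ F} = C ∩ ctSpace C x :=
  minExposedFace_eq_inter_ctSpace_general C hC x hx
end

section
/- The cone over the Veronese embedding C_{n,2d} = cone{φ_{n,2d}(z) : z ∈ R^n} is d-neighborly: for any unit vectors z^(1),...,z^(d) ∈ R^n, the linear functional corresponding to the polynomial z ↦ ∏_{i=1}^d (‖z‖²‖z^(i)‖² - ⟨z, z^(i)⟩²) is nonnegative on C_{n,2d} and vanishes at a normalized extreme ray φ(z) (z unit) if and only if z = ±z^(i) for some i. -/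
open Set RealInnerProductSpace Metric

/-- The cone over the Veronese embedding is `d`-neighborly: for unit vectors
`zs 1, ..., zs d`, the linear functional `L` with `L(φ z) = ∏ i, (‖z‖²‖zs i‖² - ⟨z, zs i⟩²)`
is nonnegative on the cone generated by the image of `φ`, and vanishes at a normalized extreme
ray `φ z` (with `z` unit) iff `z = ± zs i` for some `i`. -/
theorem veronese_d_neighborly {n D : ℕ} (hD : 0 < D)
    {F : Type*} [NormedAddCommGroup F] [InnerProductSpace ℝ F]
    (φ : EuclideanSpace ℝ (Fin n) → F)
    (hφ : ∀ a b : EuclideanSpace ℝ (Fin n), ⟪φ a, φ b⟫ = (⟪a, b⟫ : ℝ) ^ (2 * D))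
    (L : F →ₗ[ℝ] ℝ)
    (zs : Fin D → EuclideanSpace ℝ (Fin n)) (hzs : ∀ i, ‖zs i‖ = 1)
    (hL : ∀ z : EuclideanSpace ℝ (Fin n),
      L (φ z) = ∏ i, (‖z‖ ^ 2 * ‖zs i‖ ^ 2 - (⟪z, zs i⟫ : ℝ) ^ 2)) :
    (∀ w ∈ {w : F | ∃ (N : ℕ) (c : Fin N → ℝ) (pts : Fin N → EuclideanSpace ℝ (Fin n)),
        (∀ j, 0 ≤ c j) ∧ w = ∑ j, c j • φ (pts j)}, 0 ≤ L w) ∧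
      ∀ z : EuclideanSpace ℝ (Fin n), ‖z‖ = 1 →
        (L (φ z) = 0 ↔ ∃ i, z = zs i ∨ z = -(zs i)) := by
  have key : ∀ z : EuclideanSpace ℝ (Fin n), 0 ≤ L (φ z) := by
    intro z
    rw [hL]
    apply Finset.prod_nonneg
    intro i _
    have h := abs_real_inner_le_norm z (zs i)
    have h2 : |(⟪z, zs i⟫ : ℝ)| ^ 2 ≤ (‖z‖ * ‖zs i‖) ^ 2 := by
      apply pow_le_pow_left₀ (abs_nonneg _) h
    rw [sq_abs] at h2
    nlinarith [norm_nonneg z, norm_nonneg (zs i)]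
  constructor
  · rintro w ⟨N, c, pts, hc, rfl⟩
    rw [map_sum]
    apply Finset.sum_nonneg
    intro j _
    rw [map_smul]
    exact mul_nonneg (hc j) (key (pts j))
  · intro z hz
    have hform : L (φ z) = ∏ i, (1 - (⟪z, zs i⟫ : ℝ) ^ 2) := by
      rw [hL]
      apply Finset.prod_congr rfl
      intro i _
      rw [hz, hzs i]; ring
    rw [hform]
    constructor
    · intro h
      rcases Finset.prod_eq_zero_iff.mp h with ⟨i, _, hi⟩
      refine ⟨i, ?_⟩
      have h1 : (⟪z, zs i⟫ : ℝ) * ⟪z, zs i⟫ = 1 := by nlinarith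
      rcases mul_self_eq_one_iff.mp h1 with h2 | h2
      · left
        exact (inner_eq_one_iff_of_norm_eq_one hz (hzs i)).mp h2
      · right
        have h3 : (⟪z, -(zs i)⟫ : ℝ) = 1 := by
          rw [inner_neg_right, h2]; ring
        have h4 : ‖-(zs i)‖ = 1 := by rw [norm_neg]; exact hzs i
        exact (inner_eq_one_iff_of_norm_eq_one hz h4).mp h3
    · rintro ⟨i, hi | hi⟩ <;>
      · apply Finset.prod_eq_zero (Finset.mem_univ i)
        subst hi
        simp only [inner_neg_left, real_inner_self_eq_norm_sq]
        first
        | (rw [hzs i]; ring)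
        | (rw [norm_neg, hzs i]; ring)
end

section
/- Let A: R^d → R^n be linear with null(A) containing a strictly positive vector, let k < d, and define B(x) = (Ax, 1'x). If for every x* ≥ 0 with at most k nonzero entries, x* is the unique solution of min 1'x subject to Ax = Ax*, x ≥ 0, then for every such x*, the point Bx* has a unique preimage in the nonnegative orthant R^d_+, and conversely. -/
open Set RealInnerProductSpace Metric

/-- Let `A : ℝ^d → ℝ^n` have a strictly positive vector in its kernel and `k < d`,
and let `B x = (A x, 1'x)`. Then exact recovery (every nonnegative `k`-sparse `xs` is the unique
minimizer of `∑ x` over `{x ≥ 0 : A x = A xs}`) holds iff every such `B xs` has a unique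
preimage in the nonnegative orthant. -/
theorem exact_recovery_iff_unique_preimage {d n k : ℕ}
    (A : (Fin d → ℝ) →ₗ[ℝ] (Fin n → ℝ))
    (hker : ∃ w : Fin d → ℝ, A w = 0 ∧ ∀ i, 0 < w i) (hk : k < d) :
    (∀ xs : Fin d → ℝ, (∀ i, 0 ≤ xs i) → {i | xs i ≠ 0}.ncard ≤ k →
        ∀ x : Fin d → ℝ, (∀ i, 0 ≤ x i) → A x = A xs → x ≠ xs →
          ∑ i, xs i < ∑ i, x i)
      ↔
    (∀ xs : Fin d → ℝ, (∀ i, 0 ≤ xs i) → {i | xs i ≠ 0}.ncard ≤ k →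
        ∀ x : Fin d → ℝ, (∀ i, 0 ≤ x i) → A x = A xs → ∑ i, x i = ∑ i, xs i →
          x = xs) := by
  obtain ⟨w, hw0, hwpos⟩ := hker
  constructor
  · intro h xs hxs hsupp x hx hAx hsum
    by_contra hne
    exact absurd hsum.symm (ne_of_lt (h xs hxs hsupp x hx hAx hne))
  · intro h xs hxs hsupp x hx hAx hne
    have hd : 0 < d := lt_of_le_of_lt (Nat.zero_le k) hk
    have hsw : 0 < ∑ i, w i :=
      Finset.sum_pos (fun i _ => hwpos i) (Finset.univ_nonempty_iff.mpr ⟨⟨0, hd⟩⟩)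
    rcases lt_trichotomy (∑ i, x i) (∑ i, xs i) with hlt | heq | hgt
    · exfalso
      set t := (∑ i, xs i - ∑ i, x i) / ∑ i, w i with ht
      have htpos : 0 < t := div_pos (by linarith) hsw
      have hA' : A (x + t • w) = A xs := by
        rw [map_add, map_smul, hw0, smul_zero, add_zero, hAx]
      have hs' : ∑ i, (x + t • w) i = ∑ i, xs i := by
        have : t * ∑ i, w i = ∑ i, xs i - ∑ i, x i := by
          rw [ht]; field_simp
        simp only [Pi.add_apply, Pi.smul_apply, smul_eq_mul,
          Finset.sum_add_distrib, ← Finset.mul_sum]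
        linarith
      have heqx : x + t • w = xs :=
        h xs hxs hsupp (x + t • w)
          (fun i => add_nonneg (hx i) (le_of_lt (mul_pos htpos (hwpos i)))) hA' hs'
      obtain ⟨i, hi⟩ : ∃ i, xs i = 0 := by
        by_contra hall
        push_neg at hall
        have huniv : {i | xs i ≠ 0} = Set.univ := Set.eq_univ_of_forall hall
        rw [huniv, Set.ncard_univ, Nat.card_eq_fintype_card, Fintype.card_fin] at hsupp
        omega
      have hco := congrFun heqx i
      simp only [Pi.add_apply, Pi.smul_apply, smul_eq_mul, hi] at hco
      have := mul_pos htpos (hwpos i)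
      have := hx i
      linarith
    · exact absurd (h xs hxs hsupp x hx hAx heq) hne
    · exact hgt
end
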